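/- Let N be a proper element of a multiplication lattice L-module M. The following are equivalent: (1) N is a classical prime element of M; (2) (N:B) = (N:I_M) for every proper element B ∈ M with B > N; (3) (N:X) = (N:I_M) for every X ∈ M with X ≰ N; (4) N = (N:a) for every proper element a ∈ L with (N:I_M) < a. -/
import Mathlib


open CompleteLattice

universe u v

/-- A multiplicative lattice: a complete lattice with a commutative, associative
multiplication distributing over arbitrary joins, whose greatest element `⊤` is the
multiplicative identity `1`.  Following the standing assumptions of the paper, we also
require that the lattice is compactly generated, that `1` is compact and that finite
products of compact elements are compact. -/
class MultiplicativeLattice (L : Type u) extends CompleteLattice L, CommMonoid L where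
  mul_sSup : ∀ (a : L) (S : Set L), a * sSup S = ⨆ b ∈ S, a * b
  one_eq_top : (1 : L) = ⊤
  compactlyGenerated : ∀ a : L, a = sSup {c : L | IsCompactElement c ∧ c ≤ a}
  top_compact : IsCompactElement (⊤ : L)
  mul_compact : ∀ a b : L, IsCompactElement a → IsCompactElement b →
    IsCompactElement (a * b)

/-- A lattice module `M` over a multiplicative lattice `L`. -/
class LatticeModule (L : Type u) [MultiplicativeLattice L] (M : Type v)
    extends CompleteLattice M, SMul L M where
  sSup_smul : ∀ (S : Set L) (A : M), (SupSet.sSup S : L) • A = ⨆ a ∈ S, a • A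
  smul_sSup : ∀ (a : L) (S : Set M), a • (sSup S) = ⨆ B ∈ S, a • B
  mul_smul : ∀ (a b : L) (A : M), (a * b) • A = a • b • A
  one_smul : ∀ A : M, (1 : L) • A = A
  bot_smul : ∀ A : M, (⊥ : L) • A = (⊥ : M)

section LDefs

variable {L : Type u} [MultiplicativeLattice L]

/-- The residual `(a : b)` in `L`. -/
def lcolon (a b : L) : L := sSup {x : L | x * b ≤ a}

/-- The radical `√a` of an element of `L`. -/
def lrad (a : L) : L :=
  sSup {x : L | IsCompactElement x ∧ ∃ n : ℕ, 0 < n ∧ x ^ n ≤ a}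

/-- A prime element of `L`: proper, and `a * b ≤ p` implies `a ≤ p` or `b ≤ p`. -/
def IsPrimeL (p : L) : Prop :=
  p < 1 ∧ ∀ a b : L, a * b ≤ p → a ≤ p ∨ b ≤ p

/-- A primary element of `L`: proper, and for compact `a, b`, `a * b ≤ q` implies
`a ≤ q` or `b ^ n ≤ q` for some positive `n`. -/
def IsPrimaryL (q : L) : Prop :=
  q < 1 ∧ ∀ a b : L, IsCompactElement a → IsCompactElement b → a * b ≤ q →
    a ≤ q ∨ ∃ n : ℕ, 0 < n ∧ b ^ n ≤ q

/-- A principal element of `L` (meet principal and join principal). -/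
def IsPrincipalElemL (e : L) : Prop :=
  (∀ a b : L, a ⊓ b * e = (lcolon a e ⊓ b) * e) ∧
  (∀ a b : L, lcolon (a * e ⊔ b) e = lcolon b e ⊔ a)

end LDefs

/-- `L` is a PG-lattice: every element is a join of principal elements. -/
def IsPGLattice (L : Type u) [MultiplicativeLattice L] : Prop :=
  ∀ a : L, a = sSup {p : L | IsPrincipalElemL p ∧ p ≤ a}

section MDefs

variable (L : Type u) {M : Type v} [MultiplicativeLattice L] [LatticeModule L M]

/-- The residual `(A : B) ∈ L` of two elements of `M`. -/
def colon (A B : M) : L := sSup {x : L | x • B ≤ A}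

/-- The residual `(N : a) ∈ M` of an element of `M` by an element of `L`. -/
def mcolon (N : M) (a : L) : M := sSup {X : M | a • X ≤ N}

/-- A prime element of `M`. -/
def IsPrimeM (N : M) : Prop :=
  N < ⊤ ∧ ∀ (a : L) (X : M), a • X ≤ N → X ≤ N ∨ a • (⊤ : M) ≤ N

/-- A primary element of `M`. -/
def IsPrimaryM (N : M) : Prop :=
  N < ⊤ ∧ ∀ (a : L) (X : M), a • X ≤ N →
    X ≤ N ∨ ∃ n : ℕ, 0 < n ∧ (a ^ n) • (⊤ : M) ≤ N

/-- The radical `rad N` of an element of `M`: the meet of all prime elements above it. -/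
def mrad (N : M) : M := sInf {P : M | IsPrimeM L P ∧ N ≤ P}

/-- A pseudo-primary element of `M`. -/
def IsPseudoPrimary (N : M) : Prop :=
  N < ⊤ ∧ ∀ (a : L) (X : M), a • X ≤ N → a ≤ colon L N ⊤ ∨ X ≤ mrad L N

/-- A classical prime element of `M`. -/
def IsClassicalPrime (N : M) : Prop :=
  N < ⊤ ∧ ∀ (a b : L) (K : M), (a * b) • K ≤ N → a • K ≤ N ∨ b • K ≤ N

/-- A pseudo-classical primary element of `M`. -/
def IsPseudoClassicalPrimary (N : M) : Prop :=
  N < ⊤ ∧ ∀ (a b : L) (K : M), (a * b) • K ≤ N → a • K ≤ N ∨ b • K ≤ mrad L N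

/-- A principal element of `M` (meet principal and join principal). -/
def IsPrincipalElem (N : M) : Prop :=
  (∀ (b : L) (B : M), (b ⊓ colon L B N) • N = b • N ⊓ B) ∧
  (∀ (b : L) (B : M), b ⊔ colon L B N = colon L (b • N ⊔ B) N)

/-- The saturation `S_p(N)` of `N` with respect to `p`. -/
def saturation (N : M) (p : L) : M :=
  sSup {X : M | ∃ c : L, ¬ c ≤ p ∧ c • X ≤ N}

variable (M)

/-- `M` is a PG-lattice `L`-module. -/
def IsPGModule : Prop := ∀ N : M, N = sSup {P : M | IsPrincipalElem L P ∧ P ≤ N}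

/-- `M` is a multiplication lattice `L`-module. -/
def IsMultiplicationModule : Prop := ∀ N : M, ∃ a : L, N = a • (⊤ : M)

/-- `M` is a faithful `L`-module. -/
def IsFaithful : Prop := colon L (⊥ : M) (⊤ : M) = (⊥ : L)

/-- `M` is a CG (compactly generated) lattice `L`-module. -/
def IsCGModule : Prop := ∀ N : M, N = sSup {K : M | IsCompactElement K ∧ K ≤ N}

end MDefs

section Aux

variable {L : Type u} {M : Type v} [MultiplicativeLattice L] [LatticeModule L M]

lemma aux_smul_sup (a : L) (X Y : M) : a • (X ⊔ Y) = a • X ⊔ a • Y := by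
  have h := LatticeModule.smul_sSup a ({X, Y} : Set M)
  rwa [sSup_pair, iSup_pair] at h

lemma aux_sup_smul (a b : L) (X : M) : (a ⊔ b) • X = a • X ⊔ b • X := by
  have h := LatticeModule.sSup_smul ({a, b} : Set L) X
  rwa [sSup_pair, iSup_pair] at h

lemma aux_smul_mono_right (a : L) {X Y : M} (h : X ≤ Y) : a • X ≤ a • Y := by
  have := aux_smul_sup a X Y
  rw [sup_eq_right.mpr h] at this
  rw [this]; exact le_sup_left

lemma aux_smul_mono_left {a b : L} (h : a ≤ b) (X : M) : a • X ≤ b • X := by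
  have := aux_sup_smul a b X
  rw [sup_eq_right.mpr h] at this
  rw [this]; exact le_sup_left

lemma aux_colon_smul_le (N B : M) : (colon L N B) • B ≤ N := by
  rw [colon, LatticeModule.sSup_smul]
  exact iSup₂_le fun x hx => hx

lemma aux_le_colon {x : L} {N B : M} (h : x • B ≤ N) : x ≤ colon L N B := le_sSup h

lemma aux_smul_mcolon_le (N : M) (a : L) : a • mcolon L N a ≤ N := by
  rw [mcolon, LatticeModule.smul_sSup]
  exact iSup₂_le fun X hX => hX

lemma aux_le_mcolon {a : L} {X N : M} (h : a • X ≤ N) : X ≤ mcolon L N a := le_sSup h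

lemma aux_le_one (a : L) : a ≤ 1 := by
  rw [MultiplicativeLattice.one_eq_top]; exact le_top

lemma aux_colon_top_le (N B : M) : colon L N (⊤ : M) ≤ colon L N B :=
  sSup_le fun x hx => aux_le_colon (le_trans (aux_smul_mono_right x le_top) hx)

end Aux

theorem stmt12 {L : Type u} {M : Type v} [MultiplicativeLattice L] [LatticeModule L M]
    (hmul : IsMultiplicationModule L M) (N : M) (hN : N < ⊤) :
    List.TFAE [
      IsClassicalPrime L N,
      ∀ B : M, B < ⊤ → N < B → colon L N B = colon L N (⊤ : M),
      ∀ X : M, ¬ X ≤ N → colon L N X = colon L N (⊤ : M),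
      ∀ a : L, a < 1 → colon L N (⊤ : M) < a → N = mcolon L N a] := by
  tfae_have 1 → 3 := by
    rintro ⟨-, hcp⟩ X hX
    refine le_antisymm (sSup_le fun x hx => ?_) (aux_colon_top_le N X)
    obtain ⟨b, rfl⟩ := hmul X
    have h1 : (x * b) • (⊤ : M) ≤ N := by
      rw [LatticeModule.mul_smul]; exact hx
    rcases hcp x b ⊤ h1 with h | h
    · exact aux_le_colon h
    · exact absurd h hX
  tfae_have 3 → 2 := fun h3 B _ hNB => h3 B (not_le_of_gt hNB)
  tfae_have 2 → 4 := by
    intro h2 a ha haN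
    refine le_antisymm (aux_le_mcolon (le_trans (aux_smul_mono_left (aux_le_one a) N)
      (by rw [LatticeModule.one_smul]))) ?_
    by_contra hcon
    set B : M := N ⊔ mcolon L N a with hB
    have haB : a • B ≤ N := by
      rw [hB, aux_smul_sup]
      exact sup_le (le_trans (aux_smul_mono_left (aux_le_one a) N)
        (by rw [LatticeModule.one_smul])) (aux_smul_mcolon_le N a)
    have hNltB : N < B := lt_of_le_of_ne le_sup_left (by
      intro h; exact hcon (le_trans le_sup_right h.ge))
    have hBtop : B < ⊤ := by
      rcases lt_or_eq_of_le (le_top : B ≤ ⊤) with h | h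
      · exact h
      · exact absurd (h ▸ aux_le_colon haB) (not_le_of_gt haN)
    have := h2 B hBtop hNltB
    exact absurd (this ▸ aux_le_colon haB) (not_le_of_gt haN)
  tfae_have 4 → 1 := by
    intro h4
    refine ⟨hN, fun a b K habK => ?_⟩
    by_cases hb : b ≤ colon L N (⊤ : M)
    · exact Or.inr (le_trans (le_trans (aux_smul_mono_left hb K)
        (aux_smul_mono_right _ le_top)) (aux_colon_smul_le N ⊤))
    · set c := colon L N (⊤ : M) with hc
      set d := b ⊔ c with hd
      have hcd : c < d := lt_of_le_of_ne le_sup_right (by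
        intro h; exact hb (h ▸ le_sup_left))
      have hdaK : d • (a • K) ≤ N := by
        rw [hd, aux_sup_smul]
        refine sup_le ?_ ?_
        · rw [← LatticeModule.mul_smul, mul_comm]; exact habK
        · exact le_trans (aux_smul_mono_right c le_top) (aux_colon_smul_le N ⊤)
      rcases lt_or_eq_of_le (aux_le_one d) with hd1 | hd1
      · left
        have := h4 d hd1 hcd
        rw [this]
        exact aux_le_mcolon hdaK
      · left
        have : a • K ≤ N := by
          have h1 : (1 : L) • (a • K) ≤ N := hd1 ▸ hdaK
          rwa [LatticeModule.one_smul] at h1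
        exact this
  tfae_finish
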